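/- Let (X,μ,T,α) be a Gibbs–Markov map with full branches, let G be a finite group with identity e, and let ψ:X→G be constant on each element of α and such that for every g∈G there exists n∈ℕ with μ({x∈X : ψ_n(x)=g})>0. Define the return time τ(x)=min{ j>0 : ψ_j(x)=e }. Then τ has exponential tails: there exist C'>0 and λ'∈(0,1) such that μ({x∈X : τ(x)>n}) ≤ C'·(λ')^n for all n∈ℕ. -/

import Mathlib

open MeasureTheory Filter Topology Set
open scoped ENNReal

noncomputable section

/-- The cocycle `ψ_n(x) = ψ(T^{n-1} x) ⋯ ψ(T x) · ψ(x)` driven by `T`. -/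
def cocycle {X G : Type*} [Monoid G] (T : X → X) (ψ : X → G) : ℕ → X → G
  | 0, _ => 1
  | n + 1, x => ψ (T^[n] x) * cocycle T ψ n x

/-- The collection `α_n` of (nonempty) `n`-cylinders `⋂_{j<n} T^{-j} a_j`, `a_j ∈ α`. -/
def cylinders {X : Type*} (T : X → X) (α : Set (Set X)) (n : ℕ) : Set (Set X) :=
  {c | c.Nonempty ∧ ∃ a : Fin n → Set X, (∀ j, a j ∈ α) ∧ c = ⋂ j : Fin n, T^[(j : ℕ)] ⁻¹' a j}

/-- Birkhoff (ergodic) sums `φ_n = ∑_{j<n} φ ∘ T^j`. -/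
def birkhoff {X : Type*} (T : X → X) (φ : X → ℝ) (n : ℕ) (x : X) : ℝ :=
  ∑ j ∈ Finset.range n, φ (T^[j] x)

/-- A Gibbs–Markov map with full branches: `μ` a Borel probability measure, `T`
measure-preserving, ergodic and topologically mixing, Markov with full branches for the
countable partition `α`, with big images, and a potential `φ` (the log Jacobian
`log dμ/d(μ∘T)`) that is locally Hölder (w.r.t. the separation metric, expressed through
cylinders) and has the Gibbs property. -/
structure IsGibbsMarkov {X : Type*} [MetricSpace X] [MeasurableSpace X]
    (μ : Measure X) (T : X → X) (α : Set (Set X)) (φ : X → ℝ) : Prop where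
  prob : IsProbabilityMeasure μ
  measurable_T : Measurable T
  measurePreserving : MeasurePreserving T μ μ
  ergodic : Ergodic T μ
  topMixing : ∀ U V : Set X, IsOpen U → IsOpen V → U.Nonempty → V.Nonempty →
    ∃ N, ∀ n ≥ N, (U ∩ T^[n] ⁻¹' V).Nonempty
  countable : α.Countable
  measurableSet : ∀ a ∈ α, MeasurableSet a
  nonempty : ∀ a ∈ α, a.Nonempty
  pairwiseDisjoint : α.PairwiseDisjoint id
  cover : ⋃₀ α = univ
  fullBranches : ∀ a ∈ α, Set.BijOn T a univ
  bigImages : ∃ c : ℝ≥0∞, 0 < c ∧ ∀ a ∈ α, c ≤ μ (T '' a)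
  holder : ∃ C > (0 : ℝ), ∃ β ∈ Set.Ioo (0 : ℝ) 1, ∀ n, ∀ c ∈ cylinders T α n,
    ∀ x ∈ c, ∀ y ∈ c, |φ x - φ y| ≤ C * β ^ n
  gibbs : ∃ C > (0 : ℝ), ∀ n : ℕ, ∀ c ∈ cylinders T α (n + 1), ∀ x ∈ c,
    (μ c).toReal / C ≤ Real.exp (birkhoff T φ (n + 1) x) ∧
    Real.exp (birkhoff T φ (n + 1) x) ≤ C * (μ c).toReal

/-- Condition (D) at `g ∈ G`. -/
def CondD {X G : Type*} [MeasurableSpace X] [Group G]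
    (μ : Measure X) (T : X → X) (α : Set (Set X)) (ψ : X → G) (g : G) : Prop :=
  ∀ ε > (0 : ℝ), ∀ n₀ : ℕ, ∃ n₁ > n₀, ∀ n ≥ n₁, ∃ n' ∈ Set.Icc n₀ n₁,
    ∀ b ∈ cylinders T α n',
      (μ {x | cocycle T ψ n x = g}).toReal / (1 + ε) ≤
          (μ (b ∩ {x | cocycle T ψ n x = g})).toReal / (μ b).toReal ∧
      (μ (b ∩ {x | cocycle T ψ n x = g})).toReal / (μ b).toReal ≤
          (1 + ε) * (μ {x | cocycle T ψ n x = g}).toReal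

/-! Let `A n = {τ > n}`. It is a union of `n`-cylinders, on each of which `ψ_n` is a constant
`g ≠ 1`. Since `G` is finite, there are `K` and `δ > 0` such that every `g ≠ 1` is undone by a
cylinder `c_g` of length at most `K` and measure at least `δ` on which `ψ_{m_g} = g⁻¹`. Full
branches and the Gibbs property give `μ (c ∩ T^{-n} c_g) ≥ μ c * μ c_g / C` for every `n`-cylinder
`c`, and on `c ∩ T^{-n} c_g` the cocycle is back at `1` at time `n + m_g ≤ n + K`. Hence
`μ (A (n + K)) ≤ (1 - δ / C) μ (A n)`, which iterates to exponential decay. -/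

lemma le_inv_mul_pow_of_le_mul {f : ℕ → ℝ} (hf : ∀ n, f n ≤ 1) {K : ℕ} (hK : K ≠ 0)
    {b : ℝ} (hb0 : 0 < b) (hb1 : b ≤ 1) (hrec : ∀ n, 0 < n → f (n + K) ≤ b * f n) (n : ℕ) :
    f n ≤ b⁻¹ * (b ^ (K⁻¹ : ℝ)) ^ n := by
  set lam := b ^ (K⁻¹ : ℝ)
  have hlamK : lam ^ K = b := Real.rpow_inv_natCast_pow hb0.le hK
  have hlam0 : 0 ≤ lam := Real.rpow_nonneg hb0.le _
  have hlam1 : lam ≤ 1 := Real.rpow_le_one hb0.le hb1 (by positivity)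
  induction n using Nat.strong_induction_on with
  | _ n ih =>
    rcases le_or_gt n K with hn | hn
    · calc f n ≤ b⁻¹ * lam ^ K := by rw [hlamK, inv_mul_cancel₀ hb0.ne']; exact hf n
        _ ≤ b⁻¹ * lam ^ n :=
          mul_le_mul_of_nonneg_left (pow_le_pow_of_le_one hlam0 hlam1 hn) (by positivity)
    · obtain ⟨m, rfl⟩ : ∃ m, n = m + K := ⟨n - K, by omega⟩
      calc f (m + K) ≤ b * f m := hrec m (by omega)
        _ ≤ b * (b⁻¹ * lam ^ m) := by gcongr; exact ih m (by omega)
        _ = b⁻¹ * lam ^ (m + K) := by rw [pow_add, hlamK]; field_simp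

lemma exists_le_pow_of_le_mul {f : ℕ → ℝ} (hf0 : ∀ n, 0 ≤ f n) (hf1 : ∀ n, f n ≤ 1) {K : ℕ}
    (hK : K ≠ 0) {b : ℝ} (hb : b < 1) (hrec : ∀ n, 0 < n → f (n + K) ≤ b * f n) :
    ∃ C > (0 : ℝ), ∃ lam ∈ Ioo (0 : ℝ) 1, ∀ n, f n ≤ C * lam ^ n := by
  set b' := max b 2⁻¹
  have hb'0 : 0 < b' := lt_max_of_lt_right (by norm_num)
  have hb'1 : b' < 1 := max_lt hb (by norm_num)
  refine ⟨b'⁻¹, inv_pos.2 hb'0, b' ^ (K⁻¹ : ℝ),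
    ⟨Real.rpow_pos_of_pos hb'0 _, Real.rpow_lt_one hb'0.le hb'1 (by positivity)⟩,
    le_inv_mul_pow_of_le_mul hf1 hK hb'0 hb'1.le fun n hn => ?_⟩
  exact (hrec n hn).trans (mul_le_mul_of_nonneg_right (le_max_left _ _) (hf0 n))

section

variable {X : Type*} {T : X → X}

lemma measureReal_le_mul_sUnion [MeasurableSpace X] {μ : Measure X} [IsFiniteMeasure μ]
    {𝒞 : Set (Set X)} (h𝒞 : 𝒞.Countable) (hd : 𝒞.PairwiseDisjoint id)
    (hm : ∀ c ∈ 𝒞, MeasurableSet c) {B : Set X} (hB : B ⊆ ⋃₀ 𝒞) {r : ℝ} (hr : 0 ≤ r)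
    (h : ∀ c ∈ 𝒞, μ.real (B ∩ c) ≤ r * μ.real c) :
    μ.real B ≤ r * μ.real (⋃₀ 𝒞) := by
  have hB' : B ⊆ ⋃ c ∈ 𝒞, B ∩ c := fun x hx => by
    obtain ⟨c, hc, hxc⟩ := hB hx
    exact mem_biUnion hc ⟨hx, hxc⟩
  have hμB : μ B ≤ ENNReal.ofReal r * μ (⋃₀ 𝒞) := calc
    μ B ≤ ∑' c : 𝒞, μ (B ∩ c) := (measure_mono hB').trans (measure_biUnion_le μ h𝒞 _)
    _ ≤ ∑' c : 𝒞, ENNReal.ofReal r * μ c := ENNReal.tsum_le_tsum fun c => by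
      rw [← ofReal_measureReal, ← ofReal_measureReal, ← ENNReal.ofReal_mul hr]
      exact ENNReal.ofReal_le_ofReal (h c c.2)
    _ = ENNReal.ofReal r * μ (⋃₀ 𝒞) := by rw [ENNReal.tsum_mul_left, measure_sUnion h𝒞 hd hm]
  simpa [measureReal_def, ENNReal.toReal_mul, hr] using
    ENNReal.toReal_mono (by finiteness) hμB

lemma cocycle_add {G : Type*} [Monoid G] (ψ : X → G) (n m : ℕ) (x : X) :
    cocycle T ψ (n + m) x = cocycle T ψ m (T^[n] x) * cocycle T ψ n x := by
  induction m with
  | zero => simp [cocycle]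
  | succ m ih =>
    rw [← add_assoc, cocycle, cocycle, ih, ← Function.iterate_add_apply, add_comm m n, mul_assoc]

lemma birkhoff_add (φ : X → ℝ) (n m : ℕ) (x : X) :
    birkhoff T φ (n + m) x = birkhoff T φ n x + birkhoff T φ m (T^[n] x) := by
  rw [birkhoff, Finset.sum_range_add]
  simp only [birkhoff, add_comm n, Function.iterate_add_apply]

section Cylinders

variable {α : Set (Set X)}

lemma cocycle_eq_of_mem_cylinders {G : Type*} [Monoid G] {ψ : X → G}
    (hψ : ∀ a ∈ α, ∀ x ∈ a, ∀ y ∈ a, ψ x = ψ y) {n : ℕ} {c : Set X}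
    (hc : c ∈ cylinders T α n) {x y : X} (hx : x ∈ c) (hy : y ∈ c) {k : ℕ} (hk : k ≤ n) :
    cocycle T ψ k x = cocycle T ψ k y := by
  obtain ⟨-, a, ha, rfl⟩ := hc
  simp only [mem_iInter, mem_preimage] at hx hy
  induction k with
  | zero => rfl
  | succ k ih =>
    rw [cocycle, cocycle, ih (by omega), hψ _ (ha ⟨k, hk⟩) _ (hx ⟨k, hk⟩) _ (hy ⟨k, hk⟩)]

lemma cylinders_pairwiseDisjoint (hα : α.PairwiseDisjoint id) (n : ℕ) :
    (cylinders T α n).PairwiseDisjoint id := by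
  rintro _ ⟨-, a, ha, rfl⟩ _ ⟨-, b, hb, rfl⟩ hne
  refine disjoint_left.2 fun x hxa hxb => hne ?_
  simp only [id, mem_iInter, mem_preimage] at hxa hxb
  have hab : a = b := funext fun j =>
    hα.elim (ha j) (hb j) (not_disjoint_iff.2 ⟨_, hxa j, hxb j⟩)
  rw [hab]

lemma cylinders_countable (hα : α.Countable) (n : ℕ) : (cylinders T α n).Countable :=
  ((countable_pi fun _ => hα).image fun a : Fin n → Set X => ⋂ j : Fin n, T^[j] ⁻¹' a j).mono
    (by rintro _ ⟨-, a, ha, rfl⟩; exact ⟨a, ha, rfl⟩)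

lemma measurableSet_of_mem_cylinders [MeasurableSpace X] (hT : Measurable T)
    (hα : ∀ a ∈ α, MeasurableSet a) {n : ℕ} {c : Set X} (hc : c ∈ cylinders T α n) :
    MeasurableSet c := by
  obtain ⟨-, a, ha, rfl⟩ := hc
  exact .iInter fun j => (hα _ (ha j)).preimage (hT.iterate _)

lemma exists_mem_cylinders (hα : ⋃₀ α = univ) (n : ℕ) (x : X) :
    ∃ c ∈ cylinders T α n, x ∈ c := by
  choose E hEα hE using fun y : X => mem_sUnion.1 (hα ▸ mem_univ y)
  have hx : x ∈ ⋂ j : Fin n, T^[j] ⁻¹' E (T^[j] x) := mem_iInter.2 fun j => hE _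
  exact ⟨_, ⟨⟨x, hx⟩, _, fun j => hEα _, rfl⟩, hx⟩

lemma sUnion_cylinders_subset_eq (hα : ⋃₀ α = univ) {n : ℕ} {S : Set X}
    (hS : ∀ c ∈ cylinders T α n, ∀ x ∈ c, x ∈ S → c ⊆ S) :
    ⋃₀ {c ∈ cylinders T α n | c ⊆ S} = S := by
  refine Subset.antisymm (sUnion_subset fun c hc => hc.2) fun x hx => ?_
  obtain ⟨c, hc, hxc⟩ := exists_mem_cylinders hα n x
  exact ⟨c, ⟨hc, hS c hc x hxc hx⟩, hxc⟩

lemma surjOn_iterate_iInter_preimage (hfb : ∀ a ∈ α, BijOn T a univ) :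
    ∀ {n : ℕ} {a : Fin n → Set X}, (∀ j, a j ∈ α) →
      SurjOn T^[n] (⋂ j : Fin n, T^[j] ⁻¹' a j) univ
  | 0, _, _ => fun y _ => ⟨y, by simp, rfl⟩
  | n + 1, a, ha => fun y _ => by
    obtain ⟨x', hx', rfl⟩ := surjOn_iterate_iInter_preimage hfb (fun j => ha j.succ) (mem_univ y)
    obtain ⟨x, hx, rfl⟩ := (hfb (a 0) (ha 0)).surjOn (mem_univ x')
    refine ⟨x, mem_iInter.2 fun j => j.cases hx fun i => ?_, rfl⟩
    simpa [Function.iterate_succ_apply] using mem_iInter.1 hx' i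

lemma iInter_preimage_iterate_append {n m : ℕ} (a : Fin n → Set X) (b : Fin m → Set X) :
    ⋂ j : Fin (n + m), T^[j] ⁻¹' Fin.append a b j =
      (⋂ j : Fin n, T^[j] ⁻¹' a j) ∩ T^[n] ⁻¹' ⋂ j : Fin m, T^[j] ⁻¹' b j := by
  ext x
  simp [Fin.forall_fin_add, ← Function.iterate_add_apply, add_comm n]

lemma inter_preimage_iterate_mem_cylinders (hfb : ∀ a ∈ α, BijOn T a univ) {n m : ℕ}
    {c c' : Set X} (hc : c ∈ cylinders T α n) (hc' : c' ∈ cylinders T α m) :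
    c ∩ T^[n] ⁻¹' c' ∈ cylinders T α (n + m) := by
  obtain ⟨-, a, ha, rfl⟩ := hc
  obtain ⟨⟨y, hy⟩, b, hb, rfl⟩ := hc'
  obtain ⟨x, hx, rfl⟩ := surjOn_iterate_iInter_preimage hfb ha (mem_univ y)
  refine ⟨⟨x, hx, hy⟩, Fin.append a b, fun j => ?_, (iInter_preimage_iterate_append a b).symm⟩
  exact Fin.addCases (by simpa using ha) (by simpa using hb) j

end Cylinders

lemma IsGibbsMarkov.exists_measureReal_mul_le [MetricSpace X] [MeasurableSpace X]
    {μ : Measure X} {α : Set (Set X)} {φ : X → ℝ} (hGM : IsGibbsMarkov μ T α φ) :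
    ∃ C > 0, ∀ {n m : ℕ}, 0 < n → 0 < m → ∀ c ∈ cylinders T α n, ∀ c' ∈ cylinders T α m,
      μ.real c * μ.real c' ≤ C * μ.real (c ∩ T^[n] ⁻¹' c') := by
  obtain ⟨C, hC, hgibbs⟩ := hGM.gibbs
  refine ⟨C ^ 3, by positivity, fun {n m} hn hm c hc c' hc' => ?_⟩
  obtain ⟨n, rfl⟩ := Nat.exists_eq_add_one.2 hn
  obtain ⟨m, rfl⟩ := Nat.exists_eq_add_one.2 hm
  have hcc' := inter_preimage_iterate_mem_cylinders hGM.fullBranches hc hc'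
  obtain ⟨x, hx, hTx⟩ := hcc'.1
  have hμc := (hgibbs n c hc x hx).1
  have hμc' := (hgibbs m c' hc' _ hTx).1
  have hμcc' :
      Real.exp (birkhoff T φ (n + 1 + (m + 1)) x) ≤ C * μ.real (c ∩ T^[n + 1] ⁻¹' c') :=
    (hgibbs (n + 1 + m) _ hcc' x ⟨hx, hTx⟩).2
  rw [birkhoff_add, Real.exp_add] at hμcc'
  simp only [← measureReal_def, div_le_iff₀ hC] at hμc hμc'
  calc μ.real c * μ.real c'
      ≤ (Real.exp (birkhoff T φ (n + 1) x) * C) *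
          (Real.exp (birkhoff T φ (m + 1) (T^[n + 1] x)) * C) := by gcongr
    _ = C ^ 2 * (Real.exp (birkhoff T φ (n + 1) x) *
          Real.exp (birkhoff T φ (m + 1) (T^[n + 1] x))) := by ring
    _ ≤ C ^ 2 * (C * μ.real (c ∩ T^[n + 1] ⁻¹' c')) := by gcongr
    _ = C ^ 3 * μ.real (c ∩ T^[n + 1] ⁻¹' c') := by ring

section ReturnTime

variable {G : Type*} [Group G]

/-- `{τ > n}` for the first return time `τ` of the cocycle to `1`. -/
def noReturnUntil (T : X → X) (ψ : X → G) (n : ℕ) : Set X :=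
  {x | ∀ j, 0 < j → j ≤ n → cocycle T ψ j x ≠ 1}

lemma noReturnUntil_anti (ψ : X → G) {m n : ℕ} (h : m ≤ n) :
    noReturnUntil T ψ n ⊆ noReturnUntil T ψ m :=
  fun _ hx j hj hjm => hx j hj (hjm.trans h)

variable {α : Set (Set X)} {ψ : X → G}

lemma subset_noReturnUntil_of_mem_cylinders (hψ : ∀ a ∈ α, ∀ x ∈ a, ∀ y ∈ a, ψ x = ψ y)
    {n : ℕ} {c : Set X} (hc : c ∈ cylinders T α n) {x : X} (hxc : x ∈ c)
    (hx : x ∈ noReturnUntil T ψ n) : c ⊆ noReturnUntil T ψ n :=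
  fun _ hy j hj hjn => cocycle_eq_of_mem_cylinders hψ hc hy hxc hjn ▸ hx j hj hjn

variable [MetricSpace X] [MeasurableSpace X] {μ : Measure X} {φ : X → ℝ}

lemma exists_cylinder_cocycle_eq (hGM : IsGibbsMarkov μ T α φ)
    (hψ : ∀ a ∈ α, ∀ x ∈ a, ∀ y ∈ a, ψ x = ψ y) {g : G} (hg : g ≠ 1) {n : ℕ}
    (hn : 0 < μ {x | cocycle T ψ n x = g}) :
    ∃ m, 0 < m ∧ ∃ c ∈ cylinders T α m, 0 < μ c ∧ ∀ x ∈ c, cocycle T ψ m x = g := by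
  have hn0 : n ≠ 0 := by
    rintro rfl
    simp [cocycle, hg.symm] at hn
  have hS := sUnion_cylinders_subset_eq (T := T) (n := n) hGM.cover
    (S := {x | cocycle T ψ n x = g}) fun c hc x hxc hx _ hy =>
      (cocycle_eq_of_mem_cylinders hψ hc hy hxc le_rfl).trans hx
  rw [← hS, pos_iff_ne_zero, Ne, measure_sUnion_null_iff
    ((cylinders_countable hGM.countable n).mono (sep_subset _ _))] at hn
  push Not at hn
  obtain ⟨c, ⟨hc, hcS⟩, hμc⟩ := hn
  exact ⟨n, Nat.pos_of_ne_zero hn0, c, hc, pos_iff_ne_zero.2 hμc, hcS⟩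

lemma exists_uniform_cylinders_cocycle_eq [Finite G] (hGM : IsGibbsMarkov μ T α φ)
    (hψ : ∀ a ∈ α, ∀ x ∈ a, ∀ y ∈ a, ψ x = ψ y)
    (hhit : ∀ g : G, ∃ n : ℕ, 0 < μ {x | cocycle T ψ n x = g}) :
    ∃ K ≠ 0, ∀ᶠ δ in 𝓝[>] (0 : ℝ), ∀ g : G, g ≠ 1 → ∃ m, 0 < m ∧ m ≤ K ∧
      ∃ c ∈ cylinders T α m, δ ≤ μ.real c ∧ ∀ x ∈ c, cocycle T ψ m x = g := by
  have := hGM.prob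
  choose! m hm c hc hμc hcoc using fun g (hg : g ≠ 1) =>
    exists_cylinder_cocycle_eq hGM hψ hg (hhit g).choose_spec
  obtain ⟨K, hK⟩ := Finite.exists_le m
  refine ⟨K + 1, K.succ_ne_zero, Filter.eventually_all.2 fun g => ?_⟩
  by_cases hg : g = 1
  · exact .of_forall fun _ h => absurd hg h
  · filter_upwards [nhdsWithin_le_nhds (eventually_le_nhds
      (ENNReal.toReal_pos (hμc g hg).ne' (measure_ne_top μ _)))] with δ hδ _
    exact ⟨m g, hm g hg, (hK g).trans K.le_succ, c g, hc g hg, hδ, hcoc g hg⟩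

lemma measureReal_noReturnUntil_inter_le [IsFiniteMeasure μ] (hGM : IsGibbsMarkov μ T α φ)
    (hψ : ∀ a ∈ α, ∀ x ∈ a, ∀ y ∈ a, ψ x = ψ y) {C : ℝ} (hC : 0 < C)
    (hprod : ∀ {n m : ℕ}, 0 < n → 0 < m → ∀ c ∈ cylinders T α n, ∀ c' ∈ cylinders T α m,
      μ.real c * μ.real c' ≤ C * μ.real (c ∩ T^[n] ⁻¹' c'))
    {K : ℕ} {δ : ℝ} (hret : ∀ g : G, g ≠ 1 → ∃ m, 0 < m ∧ m ≤ K ∧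
      ∃ c ∈ cylinders T α m, δ ≤ μ.real c ∧ ∀ x ∈ c, cocycle T ψ m x = g)
    {n : ℕ} (hn : 0 < n) {c₀ : Set X} (hc₀ : c₀ ∈ cylinders T α n)
    (hc₀A : c₀ ⊆ noReturnUntil T ψ n) :
    μ.real (noReturnUntil T ψ (n + K) ∩ c₀) ≤ (1 - δ / C) * μ.real c₀ := by
  obtain ⟨x, hx⟩ := hc₀.1
  obtain ⟨m, hm, hmK, c, hc, hδc, hcoc⟩ :=
    hret (cocycle T ψ n x)⁻¹ (inv_ne_one.2 (hc₀A hx n hn le_rfl))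
  have hdisj : Disjoint (noReturnUntil T ψ (n + K) ∩ c₀) (c₀ ∩ T^[n] ⁻¹' c) := by
    refine disjoint_left.2 fun y ⟨hyA, _⟩ ⟨hyc₀, hyc⟩ => hyA (n + m) (by omega) (by omega) ?_
    rw [cocycle_add, hcoc _ hyc, cocycle_eq_of_mem_cylinders hψ hc₀ hyc₀ hx le_rfl, inv_mul_cancel]
  have hmeas : MeasurableSet (c₀ ∩ T^[n] ⁻¹' c) :=
    (measurableSet_of_mem_cylinders hGM.measurable_T hGM.measurableSet hc₀).inter
      ((measurableSet_of_mem_cylinders hGM.measurable_T hGM.measurableSet hc).preimage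
        (hGM.measurable_T.iterate n))
  have hsum :
      μ.real (noReturnUntil T ψ (n + K) ∩ c₀) + μ.real (c₀ ∩ T^[n] ⁻¹' c) ≤ μ.real c₀ := by
    rw [← measureReal_union hdisj hmeas]
    exact measureReal_mono (union_subset inter_subset_right inter_subset_left)
  have hgain : δ / C * μ.real c₀ ≤ μ.real (c₀ ∩ T^[n] ⁻¹' c) := by
    rw [div_mul_eq_mul_div, div_le_iff₀' hC]
    calc δ * μ.real c₀ ≤ μ.real c₀ * μ.real c := by rw [mul_comm]; gcongr
      _ ≤ C * μ.real (c₀ ∩ T^[n] ⁻¹' c) := hprod hn hm c₀ hc₀ c hc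
  linarith

lemma exists_measureReal_noReturnUntil_add_le [Finite G] (hGM : IsGibbsMarkov μ T α φ)
    (hψ : ∀ a ∈ α, ∀ x ∈ a, ∀ y ∈ a, ψ x = ψ y)
    (hhit : ∀ g : G, ∃ n : ℕ, 0 < μ {x | cocycle T ψ n x = g}) :
    ∃ K ≠ 0, ∃ b < 1, ∀ n, 0 < n →
      μ.real (noReturnUntil T ψ (n + K)) ≤ b * μ.real (noReturnUntil T ψ n) := by
  have := hGM.prob
  obtain ⟨C, hC, hprod⟩ := hGM.exists_measureReal_mul_le
  obtain ⟨K, hK, hret⟩ := exists_uniform_cylinders_cocycle_eq hGM hψ hhit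
  obtain ⟨δ, ⟨hret, hδC⟩, hδ⟩ :=
    ((hret.and (nhdsWithin_le_nhds (eventually_le_nhds hC))).and self_mem_nhdsWithin).exists
  refine ⟨K, hK, 1 - δ / C, sub_lt_self _ (div_pos hδ hC), fun n hn => ?_⟩
  have hA := sUnion_cylinders_subset_eq (T := T) (n := n) hGM.cover fun c hc x hxc hx =>
    subset_noReturnUntil_of_mem_cylinders hψ hc hxc hx
  rw [← hA]
  exact measureReal_le_mul_sUnion ((cylinders_countable hGM.countable n).mono (sep_subset _ _))
    ((cylinders_pairwiseDisjoint hGM.pairwiseDisjoint n).subset (sep_subset _ _))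
    (fun c hc => measurableSet_of_mem_cylinders hGM.measurable_T hGM.measurableSet hc.1)
    ((noReturnUntil_anti ψ (n.le_add_right K)).trans hA.symm.subset)
    (sub_nonneg.2 ((div_le_one hC).2 hδC))
    fun c hc => measureReal_noReturnUntil_inter_le hGM hψ hC hprod hret hn hc.1 hc.2

end ReturnTime

end

theorem return_time_exponential_tails_general
    {X : Type*} [MetricSpace X] [MeasurableSpace X]
    {G : Type*} [Group G] [Fintype G]
    {μ : Measure X} {T : X → X} {α : Set (Set X)} {φ : X → ℝ}
    (hGM : IsGibbsMarkov μ T α φ)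
    {ψ : X → G}
    (hψconst : ∀ a ∈ α, ∀ x ∈ a, ∀ y ∈ a, ψ x = ψ y)
    (hhit : ∀ g : G, ∃ n : ℕ, 0 < μ {x | cocycle T ψ n x = g}) :
    ∃ C' > (0 : ℝ), ∃ lam ∈ Set.Ioo (0 : ℝ) 1, ∀ n : ℕ,
      (μ {x | ∀ j : ℕ, 0 < j → j ≤ n → cocycle T ψ j x ≠ 1}).toReal ≤ C' * lam ^ n := by
  have := hGM.prob
  obtain ⟨K, hK, b, hb, hrec⟩ := exists_measureReal_noReturnUntil_add_le hGM hψconst hhit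
  exact exists_le_pow_of_le_mul (fun _ => measureReal_nonneg) (fun _ => measureReal_le_one)
    hK hb hrec

/-- Exponential tails of the first return time `τ(x) = min{j>0 : ψ_j(x)=e}`
of the skew product over a finite group extension of a Gibbs–Markov map. -/
theorem return_time_exponential_tails
    {X : Type*} [MetricSpace X] [MeasurableSpace X] [BorelSpace X]
    {G : Type*} [Group G] [Fintype G]
    {μ : Measure X} {T : X → X} {α : Set (Set X)} {φ : X → ℝ}
    (hGM : IsGibbsMarkov μ T α φ)
    {ψ : X → G}
    (hψconst : ∀ a ∈ α, ∀ x ∈ a, ∀ y ∈ a, ψ x = ψ y)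
    (hhit : ∀ g : G, ∃ n : ℕ, 0 < μ {x | cocycle T ψ n x = g}) :
    ∃ C' > (0 : ℝ), ∃ lam ∈ Set.Ioo (0 : ℝ) 1, ∀ n : ℕ,
      (μ {x | ∀ j : ℕ, 0 < j → j ≤ n → cocycle T ψ j x ≠ 1}).toReal ≤ C' * lam ^ n :=
  return_time_exponential_tails_general hGM hψconst hhit
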